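/- arXiv:2211.02395 — 2 statements merged into one kernel-verified Lean document; each statement's English description precedes it below -/
import Mathlib

section
/- For any graph G, the orientable domination number of the join G + K₁ satisfies DOM(G) ≤ DOM(G + K₁) ≤ DOM(G) + 1. -/
open SimpleGraph

variable {V : Type*}

/-- `D` is an orientation of the simple graph `G`: arcs only along edges, and each edge
gets exactly one of its two possible directions. -/
def IsOrientation (G : SimpleGraph V) (D : V → V → Prop) : Prop :=
  (∀ u v, D u v → G.Adj u v) ∧ (∀ u v, G.Adj u v → (D u v ↔ ¬ D v u))

/-- `S` is a dominating set of the digraph `D`. -/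
def IsDomSet (D : V → V → Prop) (S : Finset V) : Prop :=
  ∀ v, v ∉ S → ∃ u ∈ S, D u v

/-- Domination number of a digraph. -/
noncomputable def domNum (D : V → V → Prop) : ℕ :=
  sInf {n | ∃ S : Finset V, S.card = n ∧ IsDomSet D S}

/-- Orientable domination number of a graph. -/
noncomputable def DOM (G : SimpleGraph V) : ℕ :=
  sSup {n | ∃ D : V → V → Prop, IsOrientation G D ∧ domNum D = n}

/-- Independence number. -/
noncomputable def indepNum (G : SimpleGraph V) : ℕ :=
  sSup {n | ∃ S : Finset V, S.card = n ∧ ∀ u ∈ S, ∀ v ∈ S, ¬ G.Adj u v}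

/-- Matching number. -/
noncomputable def matchNum (G : SimpleGraph V) : ℕ :=
  sSup {n | ∃ M : Finset (Sym2 V), M.card = n ∧ (∀ e ∈ M, e ∈ G.edgeSet) ∧
    ∀ e ∈ M, ∀ f ∈ M, e ≠ f → ∀ v, v ∈ e → v ∉ f}

/-- Maximum order of a bipartite induced subgraph. -/
noncomputable def bipNum (G : SimpleGraph V) : ℕ :=
  sSup {n | ∃ s : Finset V, s.card = n ∧ (G.induce (s : Set V)).Colorable 2}

/-- Join of `G` with a single universal vertex (`none`). -/
def joinK1 (G : SimpleGraph V) : SimpleGraph (Option V) :=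
  SimpleGraph.fromRel (fun a b => a = none ∨ ∃ u v, a = some u ∧ b = some v ∧ G.Adj u v)

/-- Lexicographic product `G ∘ H`. -/
def lexProd {W : Type*} (G : SimpleGraph V) (H : SimpleGraph W) : SimpleGraph (V × W) :=
  SimpleGraph.fromRel (fun a b => G.Adj a.1 b.1 ∨ (a.1 = b.1 ∧ H.Adj a.2 b.2))

/-- Corona `G ⊙ H`: vertex `(u, none)` is the vertex `u` of `G`, the vertices `(u, some w)`
form the copy of `H` joined to `u`. -/
def corona {W : Type*} (G : SimpleGraph V) (H : SimpleGraph W) : SimpleGraph (V × Option W) :=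
  SimpleGraph.fromRel (fun a b =>
    (a.2 = none ∧ b.2 = none ∧ G.Adj a.1 b.1) ∨
    (a.1 = b.1 ∧ ∃ w w', a.2 = some w ∧ b.2 = some w' ∧ H.Adj w w') ∨
    (a.1 = b.1 ∧ a.2 = none ∧ b.2 ≠ none))

/-- A digraph is acyclic if it has no directed cycle. -/
def DigraphAcyclic (D : V → V → Prop) : Prop :=
  ¬ ∃ (m : ℕ) (c : ℕ → V), 0 < m ∧ (∀ i < m, D (c i) (c (i + 1))) ∧ c m = c 0

/-- A packing of a digraph: no arc joins two of its vertices and no vertex has two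
out-neighbors in it. -/
def IsPacking (D : V → V → Prop) (P : Finset V) : Prop :=
  (∀ u ∈ P, ∀ v ∈ P, ¬ D u v) ∧
  (∀ u ∈ P, ∀ v ∈ P, u ≠ v → ∀ w, ¬ (D w u ∧ D w v))

/-- Packing number of a digraph. -/
noncomputable def packNum (D : V → V → Prop) : ℕ :=
  sSup {n | ∃ P : Finset V, P.card = n ∧ IsPacking D P}

/-!
Orienting every edge at the apex of `G + K₁` towards the apex makes the apex dominate nothing, so
every dominating set of the extended orientation still dominates the original one after the apex is
dropped. Conversely, any orientation of `G + K₁` restricts to an orientation of `G`, and adding the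
apex to a dominating set of the restriction dominates the whole digraph.
-/

open Function

section Domination

variable {W : Type*}

lemma domNum_le_card {D : V → V → Prop} {S : Finset V} (h : IsDomSet D S) :
    domNum D ≤ S.card :=
  Nat.sInf_le ⟨S, rfl, h⟩

lemma exists_isDomSet_card_eq_domNum [Fintype V] (D : V → V → Prop) :
    ∃ S : Finset V, S.card = domNum D ∧ IsDomSet D S :=
  Nat.sInf_mem (s := {n | ∃ S : Finset V, S.card = n ∧ IsDomSet D S})
    ⟨_, Finset.univ, rfl, fun v hv => absurd (Finset.mem_univ v) hv⟩

lemma domNum_le_card_univ [Fintype V] (D : V → V → Prop) : domNum D ≤ Fintype.card V :=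
  domNum_le_card fun v hv => absurd (Finset.mem_univ v) hv

lemma domNum_le_DOM [Fintype V] {G : SimpleGraph V} {D : V → V → Prop}
    (hD : IsOrientation G D) : domNum D ≤ DOM G :=
  le_csSup ⟨Fintype.card V, by rintro _ ⟨D, -, rfl⟩; exact domNum_le_card_univ D⟩ ⟨D, hD, rfl⟩

lemma DOM_le {G : SimpleGraph V} {n : ℕ} (h : ∀ D, IsOrientation G D → domNum D ≤ n) :
    DOM G ≤ n :=
  csSup_le' <| by rintro _ ⟨D, hD, rfl⟩; exact h D hD

lemma IsOrientation.comap {H : SimpleGraph W} {D : W → W → Prop} (hD : IsOrientation H D)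
    (f : V → W) : IsOrientation (H.comap f) (D on f) :=
  ⟨fun u v => hD.1 (f u) (f v), fun u v => hD.2 (f u) (f v)⟩

lemma domNum_onFun_some_le [Fintype V] (D : Option V → Option V → Prop)
    (hnone : ∀ b, ¬ D none b) : domNum (D on some) ≤ domNum D := by
  obtain ⟨S, hcard, hS⟩ := exists_isDomSet_card_eq_domNum D
  have hdom : IsDomSet (D on some) S.eraseNone := by
    intro v hv
    obtain ⟨_ | u, hu, hDu⟩ := hS (some v) (mt Finset.mem_eraseNone.mpr hv)
    · exact absurd hDu (hnone _)
    · exact ⟨u, Finset.mem_eraseNone.mpr hu, hDu⟩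
  exact hcard ▸ (domNum_le_card hdom).trans (Finset.card_eraseNone_le S)

lemma domNum_le_domNum_onFun_some_add_one [Fintype V] (D : Option V → Option V → Prop) :
    domNum D ≤ domNum (D on some) + 1 := by
  obtain ⟨S, hcard, hS⟩ := exists_isDomSet_card_eq_domNum (D on some)
  have hdom : IsDomSet D S.insertNone := by
    rintro (_ | v) hv
    · exact absurd (Finset.none_mem_insertNone) hv
    · obtain ⟨u, hu, hDu⟩ := hS v (mt Finset.some_mem_insertNone.mpr hv)
      exact ⟨some u, Finset.some_mem_insertNone.mpr hu, hDu⟩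
  exact hcard ▸ Finset.card_insertNone S ▸ domNum_le_card hdom

end Domination

section JoinK1

variable {G : SimpleGraph V}

@[simp]
lemma joinK1_adj_some_some {u v : V} : (joinK1 G).Adj (some u) (some v) ↔ G.Adj u v := by
  simp only [joinK1, fromRel_adj, ne_eq, Option.some.injEq, reduceCtorEq, false_or,
    exists_and_left, exists_eq_left']
  exact ⟨fun ⟨_, h⟩ => h.elim id fun h => h.symm, fun h => ⟨G.ne_of_adj h, Or.inl h⟩⟩

@[simp]
lemma joinK1_adj_some_none (u : V) : (joinK1 G).Adj (some u) none := by
  simp [joinK1]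

lemma joinK1_comap_some : (joinK1 G).comap some = G := by
  ext u v
  exact joinK1_adj_some_some

def addSink (D : V → V → Prop) : Option V → Option V → Prop
  | some u, some v => D u v
  | some _, none => True
  | none, _ => False

lemma IsOrientation.addSink {D : V → V → Prop} (hD : IsOrientation G D) :
    IsOrientation (joinK1 G) (addSink D) := by
  refine ⟨?_, ?_⟩
  · rintro (_ | u) (_ | v) h
    · exact h.elim
    · exact h.elim
    · exact joinK1_adj_some_none u
    · exact joinK1_adj_some_some.mpr (hD.1 u v h)
  · rintro (_ | u) (_ | v) h
    · exact absurd h (joinK1 G).irrefl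
    · exact iff_of_false not_false (not_not.mpr trivial)
    · exact iff_of_true trivial not_false
    · exact hD.2 u v (joinK1_adj_some_some.mp h)

end JoinK1

theorem stmt0 {V : Type*} [Fintype V] (G : SimpleGraph V) :
    DOM G ≤ DOM (joinK1 G) ∧ DOM (joinK1 G) ≤ DOM G + 1 := by
  constructor
  · refine DOM_le fun D hD => ?_
    calc domNum D = domNum (addSink D on some) := rfl
      _ ≤ domNum (addSink D) := domNum_onFun_some_le _ fun _ => not_false
      _ ≤ DOM (joinK1 G) := domNum_le_DOM hD.addSink
  · refine DOM_le fun D hD => ?_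
    have hrestrict : IsOrientation G (D on some) := joinK1_comap_some (G := G) ▸ hD.comap some
    calc domNum D ≤ domNum (D on some) + 1 := domNum_le_domNum_onFun_some_add_one D
      _ ≤ DOM G + 1 := Nat.add_le_add_right (domNum_le_DOM hrestrict) 1
end

section
/- Let k ≥ 2 and s ≥ 2, and let X_f be the orientation of the lexicographic product C_{2k+1} ∘ \overline{K_s} in which, indexing the cycle vertices v₁,…,v_{2k+1}, all edges between layer i and layer i+1 (for i ∈ [2k]) are oriented from layer i to layer i+1, and all edges between layer 1 and layer 2k+1 are oriented from layer 1 to layer 2k+1. Then X_f is acyclic, γ(X_f) = s + 2k − 2, and ρ(X_f) = s + k − 1; in particular γ(X_f) ≠ ρ(X_f) for k ≥ 2, giving an acyclic digraph whose domination number strictly exceeds its packing number. -/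
/-!
Every arc of `X_f` raises the layer index, so `X_f` is acyclic.

Domination: layer `0` has no in-neighbours, so it lies in every dominating set. A vertex of layer
`i + 1 ∈ [2, 2k - 1]` has in-neighbours only in layer `i`, so a dominating set that misses layer
`i` contains all `s ≥ 2` vertices of layer `i + 1`; along the layers `1, …, 2k - 1` this forces
at least `2k - 2` further vertices. Layer `0` together with one vertex in each layer
`1, …, 2k - 2` dominates.

Packing: two vertices of one layer `i ≥ 1` share an in-neighbour in layer `i - 1`, and two
consecutive layers are joined by arcs, so layers `1, …, 2k` contribute at most one vertex per
pair of consecutive layers. If layer `0` is used, layers `1` and `2k` are excluded, which leaves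
at most `k - 1` vertices outside layer `0`; otherwise the packing has at most `k` vertices.
Layer `0` together with one vertex in each even layer `2, …, 2k - 2` is a packing.
-/
open SimpleGraph

variable {V : Type*}

open Finset

theorem Fin.val_sub_eq_one_iff {n : ℕ} (hn : 2 ≤ n) {a b : Fin n} :
    ((a - b : Fin n) : ℕ) = 1 ↔ (a : ℕ) = b + 1 ∨ ((a : ℕ) = 0 ∧ (b : ℕ) + 1 = n) := by
  have := b.isLt
  rcases le_or_gt b a with h | h
  · rw [Fin.coe_sub_iff_le.2 h]
    rw [Fin.le_def] at h
    omega
  · rw [Fin.coe_sub_iff_lt.2 h]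
    rw [Fin.lt_def] at h
    omega

theorem cycleGraph_adj_iff_val {n : ℕ} (hn : 2 ≤ n) {u v : Fin n} :
    (cycleGraph n).Adj u v ↔ (u : ℕ) + 1 = v ∨ (v : ℕ) + 1 = u ∨
      ((u : ℕ) = 0 ∧ (v : ℕ) + 1 = n) ∨ ((v : ℕ) = 0 ∧ (u : ℕ) + 1 = n) := by
  rw [cycleGraph_adj', Fin.val_sub_eq_one_iff hn, Fin.val_sub_eq_one_iff hn]
  omega

theorem lexProd_bot_adj {W : Type*} {G : SimpleGraph V} {a b : V × W} :
    (lexProd G (⊥ : SimpleGraph W)).Adj a b ↔ G.Adj a.1 b.1 := by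
  simp only [lexProd, fromRel_adj, bot_adj, and_false, or_false]
  exact ⟨fun h => h.2.elim id fun h' => h'.symm,
    fun h => ⟨fun hab => h.ne (congrArg Prod.fst hab), .inl h⟩⟩

theorem digraphAcyclic_of_rank_lt {D : V → V → Prop} (f : V → ℕ)
    (hf : ∀ u v, D u v → f u < f v) : DigraphAcyclic D := by
  rintro ⟨m, c, hm, hc, hcm⟩
  have hrank : ∀ i ≤ m, f (c 0) + i ≤ f (c i) := by
    intro i hi
    induction i with
    | zero => simp
    | succ i ih => have := hf _ _ (hc i hi); have := ih (by omega); omega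
  have := hrank m le_rfl
  rw [hcm] at this
  omega

theorem domNum_eq_of_isDomSet {D : V → V → Prop} {S : Finset V} (hS : IsDomSet D S)
    (hmin : ∀ T, IsDomSet D T → #S ≤ #T) : domNum D = #S :=
  le_antisymm (Nat.sInf_le ⟨S, rfl, hS⟩)
    (le_csInf ⟨_, S, rfl, hS⟩ fun _ ⟨T, hT, hTd⟩ => hT ▸ hmin T hTd)

theorem packNum_eq_of_isPacking {D : V → V → Prop} {P : Finset V} (hP : IsPacking D P)
    (hmax : ∀ Q, IsPacking D Q → #Q ≤ #P) : packNum D = #P := by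
  have hbdd : ∀ n ∈ {n | ∃ Q : Finset V, #Q = n ∧ IsPacking D Q}, n ≤ #P :=
    fun _ ⟨Q, hQ, hQp⟩ => hQ ▸ hmax Q hQp
  exact le_antisymm (csSup_le ⟨_, P, rfl, hP⟩ hbdd) (le_csSup ⟨_, hbdd⟩ ⟨P, rfl, hP⟩)

theorem add_min_one_le_sum_range (a : ℕ → ℕ) (n : ℕ)
    (h : ∀ i < n, 1 ≤ a i ∨ 2 ≤ a (i + 1)) :
    n + min (a n) 1 ≤ ∑ i ∈ range (n + 1), a i := by
  induction n with
  | zero => simp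
  | succ n ih =>
    have := ih fun i hi => h i (by omega)
    have := h n (by omega)
    rw [sum_range_succ]
    omega

theorem sum_range_le_half (b : ℕ → ℕ) (n : ℕ) (hle : ∀ i < n, b i ≤ 1)
    (hzero : ∀ i, i + 1 < n → b i = 0 ∨ b (i + 1) = 0) :
    ∑ i ∈ range n, b i ≤ (n + 1) / 2 := by
  induction n using Nat.strong_induction_on with
  | _ n ih =>
    match n with
    | 0 => simp
    | 1 => simpa using hle 0
    | n + 2 =>
      have := ih n (by omega) (fun i hi => hle i (by omega)) (fun i hi => hzero i (by omega))
      have := hle n (by omega)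
      have := hle (n + 1) (by omega)
      have := hzero n (by omega)
      rw [sum_range_succ, sum_range_succ]
      omega

section Layers

variable {n : ℕ} {W : Type*}

def layerCount (S : Finset (Fin n × W)) (i : ℕ) : ℕ :=
  #{v ∈ S | (v.1 : ℕ) = i}

theorem card_eq_sum_layerCount (S : Finset (Fin n × W)) :
    #S = ∑ i ∈ range n, layerCount S i :=
  card_eq_sum_card_fiberwise fun v _ => mem_range.2 v.1.isLt

theorem layerCount_le_card [Fintype W] (S : Finset (Fin n × W)) (i : ℕ) :
    layerCount S i ≤ Fintype.card W :=
  card_le_card_of_injOn Prod.snd (fun _ _ => mem_univ _) fun u hu v hv huv => by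
    simp only [coe_filter, Set.mem_ofPred_eq] at hu hv
    exact Prod.ext (Fin.ext (hu.2.trans hv.2.symm)) huv

theorem card_le_layerCount [Fintype W] {S : Finset (Fin n × W)} {i : ℕ} (hi : i < n)
    (h : ∀ w, (⟨i, hi⟩, w) ∈ S) : Fintype.card W ≤ layerCount S i :=
  card_le_card_of_injOn (fun w => ((⟨i, hi⟩ : Fin n), w)) (fun w _ => mem_filter.2 ⟨h w, rfl⟩)
    fun _ _ _ _ h => congrArg Prod.snd h

theorem layerCount_eq_zero_iff {S : Finset (Fin n × W)} {i : ℕ} :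
    layerCount S i = 0 ↔ ∀ v ∈ S, (v.1 : ℕ) ≠ i := by
  rw [layerCount, card_eq_zero, filter_eq_empty_iff]

end Layers

def withLayerZero {m s : ℕ} (A : Finset (Fin (m + 1))) (w₀ : Fin s) :
    Finset (Fin (m + 1) × Fin s) :=
  {0} ×ˢ univ ∪ A ×ˢ {w₀}

theorem mem_withLayerZero {m s : ℕ} {A : Finset (Fin (m + 1))} {w₀ : Fin s}
    {v : Fin (m + 1) × Fin s} :
    v ∈ withLayerZero A w₀ ↔ (v.1 : ℕ) = 0 ∨ (v.1 ∈ A ∧ v.2 = w₀) := by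
  simp only [withLayerZero, mem_union, mem_product, mem_singleton, mem_univ, and_true,
    Fin.ext_iff, Fin.val_zero]

theorem card_withLayerZero {m s : ℕ} {A : Finset (Fin (m + 1))} (hA : 0 ∉ A) (w₀ : Fin s) :
    #(withLayerZero A w₀) = s + #A := by
  rw [withLayerZero, card_union_of_disjoint, card_product, card_product]
  · simp
  · rw [Finset.disjoint_left]
    rintro ⟨i, w⟩ h1 h2
    simp only [mem_product, mem_singleton] at h1 h2
    exact hA (h1.1 ▸ h2.1)

def spineLayers (k : ℕ) : Finset (Fin (2 * k + 1)) :=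
  Ioc 0 ⟨2 * k - 2, by omega⟩

def evenLayers (k : ℕ) : Finset (Fin (2 * k + 1)) :=
  univ.map ⟨fun t : Fin (k - 1) => ⟨2 * t + 2, by omega⟩, fun _ _ h => Fin.ext (by simpa using h)⟩

theorem mem_spineLayers {k : ℕ} {i : Fin (2 * k + 1)} :
    i ∈ spineLayers k ↔ 1 ≤ (i : ℕ) ∧ (i : ℕ) ≤ 2 * k - 2 := by
  rw [spineLayers, mem_Ioc, Fin.lt_def, Fin.le_def]
  simp only [Fin.val_zero]
  omega

theorem mem_evenLayers {k : ℕ} {i : Fin (2 * k + 1)} :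
    i ∈ evenLayers k ↔ ∃ t < k - 1, (i : ℕ) = 2 * t + 2 := by
  rw [evenLayers, mem_map]
  exact ⟨fun ⟨t, _, ht⟩ => ⟨t, t.isLt, (congrArg Fin.val ht).symm⟩,
    fun ⟨t, ht, hi⟩ => ⟨⟨t, ht⟩, mem_univ _, Fin.ext hi.symm⟩⟩

theorem card_spineLayers (k : ℕ) : #(spineLayers k) = 2 * k - 2 := by
  simp [spineLayers]

theorem card_evenLayers (k : ℕ) : #(evenLayers k) = k - 1 := by
  simp [evenLayers]

-- The digraph `X_f`; layer `i : Fin (2k+1)` is the paper's layer `V_{i+1}`.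
def cycleLexOrientation (k s : ℕ) (a b : Fin (2 * k + 1) × Fin s) : Prop :=
  (a.1 : ℕ) + 1 = b.1 ∨ ((a.1 : ℕ) = 0 ∧ (b.1 : ℕ) = 2 * k)

section CycleLexOrientation

variable {k s : ℕ}

theorem isOrientation_cycleLexOrientation (hk : 1 ≤ k) :
    IsOrientation (lexProd (cycleGraph (2 * k + 1)) ⊥) (cycleLexOrientation k s) := by
  have hn : 2 ≤ 2 * k + 1 := by omega
  refine ⟨fun u v huv => ?_, fun u v huv => ?_⟩
  · rw [lexProd_bot_adj, cycleGraph_adj_iff_val hn]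
    unfold cycleLexOrientation at huv
    omega
  · rw [lexProd_bot_adj, cycleGraph_adj_iff_val hn] at huv
    unfold cycleLexOrientation
    omega

theorem digraphAcyclic_cycleLexOrientation (hk : 1 ≤ k) :
    DigraphAcyclic (cycleLexOrientation k s) :=
  digraphAcyclic_of_rank_lt (fun v => v.1) fun u v huv => by
    unfold cycleLexOrientation at huv; omega

theorem isDomSet_cycleLexOrientation (w₀ : Fin s) :
    IsDomSet (cycleLexOrientation k s) (withLayerZero (spineLayers k) w₀) := by
  intro v hv
  simp only [mem_withLayerZero, mem_spineLayers, not_or, not_and] at hv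
  have := v.1.isLt
  by_cases hv1 : (v.1 : ℕ) = 1 ∨ (v.1 : ℕ) = 2 * k
  · refine ⟨(0, v.2), mem_withLayerZero.2 (.inl rfl), ?_⟩
    unfold cycleLexOrientation
    dsimp only
    rw [Fin.val_zero]
    omega
  · refine ⟨(⟨v.1 - 1, by omega⟩, w₀), ?_, ?_⟩
    · simp only [mem_withLayerZero, mem_spineLayers, and_true]; omega
    · unfold cycleLexOrientation; simp only; omega

theorem isPacking_cycleLexOrientation (hk : 1 ≤ k) (w₀ : Fin s) :
    IsPacking (cycleLexOrientation k s) (withLayerZero (evenLayers k) w₀) := by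
  have hmem : ∀ v ∈ withLayerZero (evenLayers k) w₀,
      (v.1 : ℕ) = 0 ∨ (∃ t < k - 1, (v.1 : ℕ) = 2 * t + 2) ∧ v.2 = w₀ := fun v hv => by
    simpa only [mem_withLayerZero, mem_evenLayers] using hv
  refine ⟨fun u hu v hv huv => ?_, fun u hu v hv huv w ⟨hwu, hwv⟩ => huv ?_⟩
  · unfold cycleLexOrientation at huv
    rcases hmem u hu with hu | ⟨⟨t, ht, hu⟩, -⟩ <;>
      rcases hmem v hv with hv | ⟨⟨t', ht', hv⟩, -⟩ <;> omega
  · unfold cycleLexOrientation at hwu hwv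
    rcases hmem u hu with hu | ⟨⟨t, ht, hu⟩, hu₂⟩
    · omega
    rcases hmem v hv with hv | ⟨⟨t', ht', hv⟩, hv₂⟩
    · omega
    exact Prod.ext (Fin.ext (by omega)) (hu₂.trans hv₂.symm)

theorem card_le_of_isDomSet (hk : 1 ≤ k) (hs : 2 ≤ s) {S : Finset (Fin (2 * k + 1) × Fin s)}
    (hS : IsDomSet (cycleLexOrientation k s) S) : s + 2 * k - 2 ≤ #S := by
  rw [card_eq_sum_layerCount, sum_range_succ']
  set a := layerCount S
  have full_of_no_arc : ∀ i (hi : i < 2 * k + 1),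
      (∀ u ∈ S, ∀ w, ¬ cycleLexOrientation k s u (⟨i, hi⟩, w)) → s ≤ a i := fun i hi h => by
    have := card_le_layerCount hi fun w => by
      by_contra hw
      obtain ⟨u, hu, huw⟩ := hS _ hw
      exact h u hu w huw
    rwa [Fintype.card_fin] at this
  have ha0 : s ≤ a 0 := full_of_no_arc 0 (by omega) fun u _ w huw => by
    unfold cycleLexOrientation at huw; dsimp only at huw; omega
  have missed_layer_forces_next :
      ∀ i < 2 * k - 2, 1 ≤ a (i + 1) ∨ 2 ≤ a (i + 1 + 1) := fun i hi => by
    by_contra! h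
    have hempty := layerCount_eq_zero_iff.1 (show a (i + 1) = 0 by omega)
    have := full_of_no_arc (i + 1 + 1) (by omega) fun u hu w huw => by
      unfold cycleLexOrientation at huw; dsimp only at huw; have := hempty u hu; omega
    omega
  have hspine :=
    add_min_one_le_sum_range (fun i => a (i + 1)) (2 * k - 2) missed_layer_forces_next
  have hsub : ∑ i ∈ range (2 * k - 2 + 1), a (i + 1) ≤ ∑ i ∈ range (2 * k), a (i + 1) :=
    sum_le_sum_of_subset (range_subset_range.2 (by omega))
  omega

theorem card_le_of_isPacking (hk : 1 ≤ k) (hs : 1 ≤ s) {P : Finset (Fin (2 * k + 1) × Fin s)}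
    (hP : IsPacking (cycleLexOrientation k s) P) : #P ≤ s + k - 1 := by
  rw [card_eq_sum_layerCount]
  set b := layerCount P
  have hb0 : b 0 ≤ s := by simpa using layerCount_le_card P 0
  have hb_le_one : ∀ i, 1 ≤ i → i ≤ 2 * k → b i ≤ 1 := fun i hi₁ hi₂ =>
    card_le_one.2 fun u hu v hv => by
      rw [mem_filter] at hu hv
      by_contra huv
      refine hP.2 u hu.1 v hv.1 huv (⟨i - 1, by omega⟩, ⟨0, hs⟩) ⟨?_, ?_⟩ <;>
        (unfold cycleLexOrientation; dsimp only; omega)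
  have hb_arc : ∀ i j, j < 2 * k + 1 → (i + 1 = j ∨ (i = 0 ∧ j = 2 * k)) → b i = 0 ∨ b j = 0 :=
    fun i j hj hij => by
      by_contra! h
      obtain ⟨u, hu, hui⟩ := not_forall₂.1 (mt layerCount_eq_zero_iff.2 h.1)
      obtain ⟨v, hv, hvj⟩ := not_forall₂.1 (mt layerCount_eq_zero_iff.2 h.2)
      exact hP.1 u hu v hv (by unfold cycleLexOrientation; omega)
  rcases Nat.eq_zero_or_pos (b 0) with h0 | h0
  · have := sum_range_le_half (fun i => b (i + 1)) (2 * k)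
      (fun i hi => hb_le_one _ (by omega) (by omega)) fun i hi => hb_arc _ _ (by omega) (.inl rfl)
    rw [sum_range_succ']
    omega
  · have h1 := (hb_arc 0 1 (by omega) (.inl rfl)).resolve_left h0.ne'
    have h2k := (hb_arc 0 (2 * k) (by omega) (.inr ⟨rfl, rfl⟩)).resolve_left h0.ne'
    have := sum_range_le_half (fun i => b (i + 2)) (2 * k - 2)
      (fun i hi => hb_le_one _ (by omega) (by omega))
      fun i hi => hb_arc _ _ (by omega) (.inl rfl)
    have hsplit : ∑ i ∈ range (2 * k + 1), b i =
        b 0 + b 1 + ∑ i ∈ range (2 * k - 2), b (i + 2) + b (2 * k) := by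
      rw [show 2 * k + 1 = 2 * k - 2 + 1 + 1 + 1 by omega, sum_range_succ, sum_range_succ',
        sum_range_succ', show 2 * k - 2 + 1 + 1 = 2 * k by omega]
      ring
    omega

theorem domNum_cycleLexOrientation (hk : 1 ≤ k) (hs : 2 ≤ s) :
    domNum (cycleLexOrientation k s) = s + 2 * k - 2 := by
  have hS := isDomSet_cycleLexOrientation (k := k) (⟨0, by omega⟩ : Fin s)
  have hcard : #(withLayerZero (spineLayers k) (⟨0, by omega⟩ : Fin s)) = s + 2 * k - 2 := by
    rw [card_withLayerZero (by simp [mem_spineLayers]), card_spineLayers]; omega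
  rw [domNum_eq_of_isDomSet hS fun T hT => hcard ▸ card_le_of_isDomSet hk hs hT, hcard]

theorem packNum_cycleLexOrientation (hk : 1 ≤ k) (hs : 1 ≤ s) :
    packNum (cycleLexOrientation k s) = s + k - 1 := by
  have hP := isPacking_cycleLexOrientation hk (⟨0, hs⟩ : Fin s)
  have hcard : #(withLayerZero (evenLayers k) (⟨0, hs⟩ : Fin s)) = s + k - 1 := by
    rw [card_withLayerZero (by simp [mem_evenLayers]), card_evenLayers]; omega
  rw [packNum_eq_of_isPacking hP fun Q hQ => hcard ▸ card_le_of_isPacking hk hs hQ, hcard]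

end CycleLexOrientation

theorem stmt19 (k s : ℕ) (hk : 2 ≤ k) (hs : 2 ≤ s)
    (D : Fin (2 * k + 1) × Fin s → Fin (2 * k + 1) × Fin s → Prop)
    (hD : D = fun a b =>
      ((a.1 : ℕ) + 1 = (b.1 : ℕ)) ∨ ((a.1 : ℕ) = 0 ∧ (b.1 : ℕ) = 2 * k)) :
    IsOrientation (lexProd (cycleGraph (2 * k + 1)) (⊥ : SimpleGraph (Fin s))) D ∧
    DigraphAcyclic D ∧
    domNum D = s + 2 * k - 2 ∧
    packNum D = s + k - 1 ∧
    domNum D ≠ packNum D := by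
  obtain rfl : D = cycleLexOrientation k s := hD
  have hdom := domNum_cycleLexOrientation (k := k) (by omega) hs
  have hpack := packNum_cycleLexOrientation (k := k) (by omega) (by omega : 1 ≤ s)
  exact ⟨isOrientation_cycleLexOrientation (by omega),
    digraphAcyclic_cycleLexOrientation (by omega), hdom, hpack, by rw [hdom, hpack]; omega⟩
end
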